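/- arXiv:1410.2798 — 2 statements merged into one kernel-verified Lean document; each statement's English description precedes it below -/
import Mathlib

section
/- Let λ : T → ℝ satisfy: (i) Σ_{x∈T} λ(x) = 0, and (ii) for every j ∈ {0,…,N−1} and every y ∈ T_{j+1}, the function Q_jλ takes the same value at all of the L³ points x ∈ T_j lying in the block B^{j+1}(y). Then λ = 0. -/
open Finset

noncomputable section

/-- Points of the discrete torus `(ℤ/Nℤ)³`. -/
abbrev TPt (N : ℕ) : Type := Fin 3 → ZMod N

/-- The standard unit vector `e_μ` in the torus. -/
def unitVec (N : ℕ) (μ : Fin 3) : TPt N := fun i => if i = μ then 1 else 0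

/-- The representative of `a ∈ ℤ/Nℤ` in the symmetric range `{-(N-1)/2, …, (N-1)/2}`
(for odd `N`). -/
def symRep (N : ℕ) (a : ZMod N) : ℤ :=
  if 2 * (a.val : ℤ) + 1 ≤ (N : ℤ) then (a.val : ℤ) else (a.val : ℤ) - (N : ℤ)

/-- Shift a torus point by `k` steps in direction `μ`. -/
def shiftT {N : ℕ} (z : TPt N) (μ : Fin 3) (k : ℤ) : TPt N :=
  fun i => if i = μ then z i + (k : ZMod N) else z i

/-- The sum of the gauge field `A` along the straight lattice path from `z` to `z + t·e_μ`. -/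
def segT {N : ℕ} (A : TPt N → TPt N → ℝ) (z : TPt N) (μ : Fin 3) (t : ℤ) : ℝ :=
  if 0 ≤ t then ∑ j ∈ Finset.range t.toNat, A (shiftT z μ (j : ℤ)) (shiftT z μ ((j : ℤ) + 1))
  else ∑ j ∈ Finset.range (-t).toNat, A (shiftT z μ (-(j : ℤ))) (shiftT z μ (-(j : ℤ) - 1))

/-- The field strength `dA` on the plaquette based at `x` spanned by `e_μ, e_ν`. -/
def plaqT {N : ℕ} (A : TPt N → TPt N → ℝ) (x : TPt N) (μ ν : Fin 3) : ℝ :=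
  A x (x + unitVec N μ) + A (x + unitVec N μ) (x + unitVec N μ + unitVec N ν)
    + A (x + unitVec N μ + unitVec N ν) (x + unitVec N ν) + A (x + unitVec N ν) x

/-- The corner of the rectilinear path `Γ^π_{yx}` reached after the first `m` coordinate
moves. -/
def interPtT {N : ℕ} (y x : TPt N) (π : Equiv.Perm (Fin 3)) (m : ℕ) : TPt N :=
  fun i => if ((π.symm i : Fin 3) : ℕ) < m then x i else y i

/-- `A(Γ^π_{yx})`: the sum of `A` along the rectilinear path (not wrapping around the
torus) from `y` to `x`, moving the coordinates to their final values in the order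
`π 0, π 1, π 2`; the coordinate increments are the symmetric representatives of `x - y`. -/
def gammaSumT {N : ℕ} (A : TPt N → TPt N → ℝ) (π : Equiv.Perm (Fin 3)) (y x : TPt N) : ℝ :=
  ∑ m : Fin 3, segT A (interPtT y x π (m : ℕ)) (π m) (symRep N (x (π m) - y (π m)))

/-- `(τA)(y,x) = (1/6) Σ_π A(Γ^π_{yx})`, averaged over the `3! = 6` permutations. -/
def tauBlk {N : ℕ} (A : TPt N → TPt N → ℝ) (y x : TPt N) : ℝ :=
  (1 / 6) * ∑ π : Equiv.Perm (Fin 3), gammaSumT A π y x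

/-- The block of radius `R` centered at `y`: all `x` whose coordinates relative to `y`
have symmetric representative of absolute value at most `R`. -/
def blockF (N : ℕ) [NeZero N] (R : ℤ) (y : TPt N) : Finset (TPt N) :=
  Finset.univ.filter fun x => ∀ i, |symRep N (x i - y i)| ≤ R

/-- Membership in the coarse lattice `(Lℤ/Nℤ)³ ⊆ (ℤ/Nℤ)³`. -/
def isCoarse (L N : ℕ) (y : TPt N) : Prop :=
  ∀ i, ∃ c : ZMod N, y i = (L : ZMod N) * c

/-- The coarse unit vector `L·e_μ`. -/
def cUnitVec (L N : ℕ) (μ : Fin 3) : TPt N := fun i => if i = μ then (L : ZMod N) else 0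

/-- The block-averaged field on coarse bonds:
`(QA)(y, y+Le_μ) = L⁻⁴ Σ_{x ∈ B(y)} A(Γ_{x,x+Le_μ})`. -/
def Qc (L : ℕ) {N : ℕ} [NeZero N] (A : TPt N → TPt N → ℝ) (y : TPt N) (μ : Fin 3) : ℝ :=
  ((L : ℝ) ^ 4)⁻¹ * ∑ x ∈ blockF N (((L : ℤ) - 1) / 2) y, segT A x μ (L : ℤ)

/-! ### Auxiliary lemmas for the proof -/

lemma symRep_cast' (N : ℕ) [NeZero N] (a : ZMod N) : ((symRep N a : ℤ) : ZMod N) = a := by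
  unfold symRep
  split <;> push_cast <;> simp [ZMod.natCast_val, ZMod.cast_id', ZMod.natCast_self]

lemma symRep_two_abs_le' (N : ℕ) [NeZero N] (a : ZMod N) : 2 * |symRep N a| ≤ N := by
  have hv : a.val < N := ZMod.val_lt a
  unfold symRep
  split
  · rw [abs_of_nonneg (by positivity)]; omega
  · rw [abs_of_nonpos (by omega)]; omega

lemma symRep_eq_of (N : ℕ) [NeZero N] (r : ℤ) (hr : 2 * |r| < N) {a : ZMod N}
    (ha : (r : ZMod N) = a) : symRep N a = r := by
  have h1 := symRep_cast' N a
  have h0 : ((symRep N a - r : ℤ) : ZMod N) = 0 := by push_cast; rw [h1, ha]; ring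
  have hdvd : (N : ℤ) ∣ (symRep N a - r) := by
    rwa [ZMod.intCast_zmod_eq_zero_iff_dvd] at h0
  have h2 := symRep_two_abs_le' N a
  have h3 : |symRep N a - r| ≤ |symRep N a| + |r| := abs_sub _ _
  have := Int.eq_zero_of_abs_lt_dvd hdvd (by omega)
  omega

lemma blockF_sum {n : ℕ} [NeZero n] {R : ℤ} (hRn : 2 * R + 1 ≤ (n : ℤ)) (y : TPt n)
    (f : TPt n → ℝ) :
    ∑ z ∈ blockF n R y, f z
      = ∑ t ∈ Fintype.piFinset (fun _ : Fin 3 => Finset.Icc (-R) R),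
          f (fun i => y i + ((t i : ℤ) : ZMod n)) := by
  apply Finset.sum_nbij' (fun z => fun k => symRep n (z k - y k))
      (fun t => fun k => y k + ((t k : ℤ) : ZMod n))
  · intro z hz
    simp only [blockF, Finset.mem_filter] at hz
    simp only [Fintype.mem_piFinset, Finset.mem_Icc]
    intro k
    have := hz.2 k
    constructor <;> cases abs_cases (symRep n (z k - y k)) <;> omega
  · intro t ht
    simp only [Fintype.mem_piFinset, Finset.mem_Icc] at ht
    simp only [blockF, Finset.mem_filter, Finset.mem_univ, true_and]
    intro k
    have h1 : symRep n (y k + (t k : ZMod n) - y k) = t k := by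
      apply symRep_eq_of
      · have := ht k; cases abs_cases (t k) <;> omega
      · ring
    rw [h1]
    have := ht k
    cases abs_cases (t k) <;> omega
  · intro z hz
    funext k
    rw [symRep_cast']; ring
  · intro t ht
    simp only [Fintype.mem_piFinset, Finset.mem_Icc] at ht
    funext k
    apply symRep_eq_of
    · have := ht k; cases abs_cases (t k) <;> omega
    · ring
  · intro z hz
    congr 1
    funext k
    rw [symRep_cast']; ring

lemma bal_mem (R r t : ℤ) (hR : 0 ≤ R) (hlo : -((2*R+1)*r+R) ≤ t)
    (hhi : t ≤ (2*R+1)*r + R) :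
    -r ≤ (t+R)/(2*R+1) ∧ (t+R)/(2*R+1) ≤ r ∧ -R ≤ (t+R)%(2*R+1) - R ∧
      (t+R)%(2*R+1) - R ≤ R ∧ (2*R+1) * ((t+R)/(2*R+1)) + ((t+R)%(2*R+1) - R) = t := by
  have hM : (0:ℤ) < 2*R+1 := by omega
  have h1 : 0 ≤ (t+R) % (2*R+1) := Int.emod_nonneg _ (by omega)
  have h2 : (t+R) % (2*R+1) < 2*R+1 := Int.emod_lt_of_pos _ hM
  have h3 : (2*R+1) * ((t+R)/(2*R+1)) + (t+R)%(2*R+1) = t + R := Int.mul_ediv_add_emod _ _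
  have hexp : (2*R+1)*(r+1) = (2*R+1)*r + (2*R+1) := by ring
  have hexp2 : (2*R+1)*(-(r+1)) = -((2*R+1)*r) - (2*R+1) := by ring
  have h4 : (2*R+1) * ((t+R)/(2*R+1)) < (2*R+1) * (r+1) := by omega
  have h5 : (2*R+1) * (-(r+1)) < (2*R+1) * ((t+R)/(2*R+1)) := by omega
  have h6 : (t+R)/(2*R+1) < r+1 := lt_of_mul_lt_mul_left h4 (by omega)
  have h7 : -(r+1) < (t+R)/(2*R+1) := lt_of_mul_lt_mul_left h5 (by omega)
  omega

lemma bal_uniq (R q s : ℤ) (hs : -R ≤ s) (hs' : s ≤ R) :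
    ((2*R+1)*q + s + R)/(2*R+1) = q ∧ ((2*R+1)*q + s + R)%(2*R+1) = s + R := by
  have hM : (2*R+1 : ℤ) ≠ 0 := by omega
  have he : (2*R+1)*q + s + R = (s+R) + (2*R+1)*q := by ring
  rw [he, Int.add_mul_ediv_left _ _ hM, Int.add_mul_emod_self_left,
    Int.ediv_eq_zero_of_lt (by omega) (by omega), Int.emod_eq_of_lt (by omega) (by omega)]
  omega

lemma cube_split (R r T : ℤ) (hR : 0 ≤ R) (hr : 0 ≤ r) (hT : T = (2*R+1)*r + R)
    (g : (Fin 3 → ℤ) → ℝ) :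
    ∑ t ∈ Fintype.piFinset (fun _ : Fin 3 => Finset.Icc (-T) T), g t
  = ∑ q ∈ Fintype.piFinset (fun _ : Fin 3 => Finset.Icc (-r) r),
      ∑ s ∈ Fintype.piFinset (fun _ : Fin 3 => Finset.Icc (-R) R),
        g (fun i => (2*R+1) * q i + s i) := by
  subst hT
  rw [← Finset.sum_product']
  apply Finset.sum_nbij' (fun t => ((fun i => (t i + R)/(2*R+1)), (fun i => (t i + R)%(2*R+1) - R)))
      (fun p => fun i => (2*R+1) * p.1 i + p.2 i)
  · intro t ht
    simp only [Fintype.mem_piFinset, Finset.mem_Icc] at ht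
    simp only [Finset.mem_product, Fintype.mem_piFinset, Finset.mem_Icc]
    constructor <;> intro k <;> have := bal_mem R r (t k) hR (ht k).1 (ht k).2 <;>
      [exact ⟨this.1, this.2.1⟩; exact ⟨this.2.2.1, this.2.2.2.1⟩]
  · intro p hp
    simp only [Finset.mem_product, Fintype.mem_piFinset, Finset.mem_Icc] at hp
    simp only [Fintype.mem_piFinset, Finset.mem_Icc]
    intro k
    have h1 := (hp.1 k); have h2 := (hp.2 k)
    constructor <;> nlinarith
  · intro t ht
    simp only [Fintype.mem_piFinset, Finset.mem_Icc] at ht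
    funext k
    dsimp only
    have := bal_mem R r (t k) hR (ht k).1 (ht k).2
    omega
  · intro p hp
    simp only [Finset.mem_product, Fintype.mem_piFinset, Finset.mem_Icc] at hp
    have h1 : ∀ k, ((2*R+1) * p.1 k + p.2 k + R)/(2*R+1) = p.1 k :=
      fun k => (bal_uniq R (p.1 k) (p.2 k) (hp.2 k).1 (hp.2 k).2).1
    have h2 : ∀ k, ((2*R+1) * p.1 k + p.2 k + R)%(2*R+1) = p.2 k + R :=
      fun k => (bal_uniq R (p.1 k) (p.2 k) (hp.2 k).1 (hp.2 k).2).2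
    ext k
    · exact h1 k
    · dsimp only; rw [h2 k]; ring
  · intro t ht
    simp only [Fintype.mem_piFinset, Finset.mem_Icc] at ht
    congr 1
    funext k
    dsimp only
    have := bal_mem R r (t k) hR (ht k).1 (ht k).2
    omega

/-- The level-`j` block sum of `lam`. -/
def Sblk (L N : ℕ) [NeZero (L ^ N)] (lam : TPt (L ^ N) → ℝ) (j : ℕ) (y : TPt (L ^ N)) : ℝ :=
  ∑ z ∈ blockF (L ^ N) (((L : ℤ) ^ j - 1) / 2) y, lam z

/-- Level-`j` coarseness. -/
def coarsePt (L N j : ℕ) (x : TPt (L ^ N)) : Prop :=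
  ∀ i, ∃ c : ZMod (L ^ N), x i = (L : ZMod (L ^ N)) ^ j * c

lemma digit_decomp (L N : ℕ) (hL3 : 3 ≤ L) (hLodd : Odd L) [NeZero (L ^ N)]
    (c : ZMod (L ^ N)) :
    ∃ (d : ZMod (L ^ N)) (b : ℤ), |b| ≤ ((L : ℤ) - 1) / 2 ∧
      c = (L : ZMod (L ^ N)) * d + (b : ZMod (L ^ N)) := by
  obtain ⟨k, hk⟩ := hLodd
  have hkz : (L : ℤ) = 2 * (k : ℤ) + 1 := by exact_mod_cast hk
  have hLpos : (0:ℤ) < L := by omega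
  refine ⟨((((c.val : ℤ) + ((L:ℤ)-1)/2) / L : ℤ) : ZMod (L ^ N)),
    (((c.val : ℤ) + ((L:ℤ)-1)/2) % L) - ((L:ℤ)-1)/2, ?_, ?_⟩
  · have h1 : 0 ≤ ((c.val : ℤ) + ((L:ℤ)-1)/2) % L := Int.emod_nonneg _ (by omega)
    have h2 : ((c.val : ℤ) + ((L:ℤ)-1)/2) % L < L := Int.emod_lt_of_pos _ hLpos
    rw [abs_le]; omega
  · have hsplit : (L:ℤ) * (((c.val : ℤ) + ((L:ℤ)-1)/2) / L)
        + ((((c.val : ℤ) + ((L:ℤ)-1)/2) % L) - ((L:ℤ)-1)/2) = (c.val : ℤ) := by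
      have := Int.mul_ediv_add_emod ((c.val : ℤ) + ((L:ℤ)-1)/2) L
      omega
    have hc : (((c.val : ℤ)) : ZMod (L ^ N)) = c := by
      push_cast; simp [ZMod.natCast_val, ZMod.cast_id']
    calc c = (((c.val : ℤ)) : ZMod (L ^ N)) := hc.symm
      _ = (((L:ℤ) * (((c.val : ℤ) + ((L:ℤ)-1)/2) / L)
            + ((((c.val : ℤ) + ((L:ℤ)-1)/2) % L) - ((L:ℤ)-1)/2) : ℤ) : ZMod (L ^ N)) := by
          rw [hsplit]
      _ = _ := by push_cast; ring

lemma coarse_cover (L N : ℕ) (hL3 : 3 ≤ L) (hLodd : Odd L) [NeZero (L ^ N)]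
    (j : ℕ) (x : TPt (L ^ N)) (hx : coarsePt L N j x) :
    ∃ (y : TPt (L ^ N)) (q : Fin 3 → ℤ), coarsePt L N (j + 1) y ∧
      (∀ i, |q i| ≤ ((L : ℤ) - 1) / 2) ∧
      x = fun i => y i + ((((L : ℤ) ^ j * q i) : ℤ) : ZMod (L ^ N)) := by
  choose c hc using hx
  choose d b hb1 hb2 using fun i => digit_decomp L N hL3 hLodd (c i)
  refine ⟨fun i => (L : ZMod (L ^ N)) ^ (j + 1) * d i, b, fun i => ⟨d i, rfl⟩, hb1, ?_⟩
  funext i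
  rw [hc i, hb2 i]
  push_cast
  ring

lemma mem_block_of_coarse (L N : ℕ) (hL3 : 3 ≤ L) (hLodd : Odd L) [NeZero (L ^ N)]
    (j : ℕ) (hj : j < N) (y : TPt (L ^ N)) (q : Fin 3 → ℤ)
    (hq : ∀ i, |q i| ≤ ((L : ℤ) - 1) / 2) :
    (fun i => y i + ((((L : ℤ) ^ j * q i) : ℤ) : ZMod (L ^ N)))
      ∈ blockF (L ^ N) (((L : ℤ) ^ (j + 1) - 1) / 2) y := by
  obtain ⟨k, hk⟩ := hLodd
  have hkz : (L : ℤ) = 2 * (k : ℤ) + 1 := by exact_mod_cast hk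
  have hA0 : (0:ℤ) ≤ (L : ℤ) ^ j := by positivity
  have hA1 : (1:ℤ) ≤ (L : ℤ) ^ j := one_le_pow₀ (by omega)
  have hBC : (L : ℤ) ^ (j + 1) ≤ (L : ℤ) ^ N := pow_le_pow_right₀ (by omega) hj
  have hn : ((L ^ N : ℕ) : ℤ) = (L : ℤ) ^ N := by push_cast; ring
  have hrL : 2 * (((L:ℤ)-1)/2) + 1 = (L : ℤ) := by omega
  have hB : 2 * (((L:ℤ)^(j+1)-1)/2) + 1 = (L : ℤ) ^ (j+1) := by
    have : Odd ((L:ℤ)^(j+1)) := Odd.pow (⟨(k:ℤ), by omega⟩ : Odd (L:ℤ))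
    obtain ⟨a, ha⟩ := this
    omega
  have he2 : 2*((L:ℤ)^j * (((L:ℤ)-1)/2)) = (L:ℤ)^(j+1) - (L:ℤ)^j := by
    rw [pow_succ]
    linear_combination (L:ℤ)^j * hrL
  have habs : ∀ i, |(L:ℤ)^j * q i| ≤ (L:ℤ)^j * (((L:ℤ)-1)/2) := by
    intro i
    rw [abs_mul, abs_of_nonneg hA0]
    exact mul_le_mul_of_nonneg_left (hq i) hA0
  simp only [blockF, Finset.mem_filter, Finset.mem_univ, true_and]
  intro i
  have harg : (y i + (((L : ℤ) ^ j * q i : ℤ) : ZMod (L ^ N))) - y i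
      = (((L : ℤ) ^ j * q i : ℤ) : ZMod (L ^ N)) := by ring
  have hsr : symRep (L ^ N) ((y i + (((L : ℤ) ^ j * q i : ℤ) : ZMod (L ^ N))) - y i)
      = (L : ℤ) ^ j * q i := by
    rw [harg]
    apply symRep_eq_of
    · have := habs i; omega
    · rfl
  rw [hsr]
  have := habs i; omega

lemma coarse_shift (L N : ℕ) [NeZero (L ^ N)]
    (j : ℕ) (y : TPt (L ^ N)) (hy : coarsePt L N (j + 1) y) (q : Fin 3 → ℤ) :
    coarsePt L N j (fun i => y i + ((((L : ℤ) ^ j * q i) : ℤ) : ZMod (L ^ N))) := by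
  intro i
  obtain ⟨e, he⟩ := hy i
  refine ⟨(L : ZMod (L ^ N)) * e + ((q i : ℤ) : ZMod (L ^ N)), ?_⟩
  dsimp only
  rw [he]
  push_cast
  ring

lemma step_lemma (L N : ℕ) (hL3 : 3 ≤ L) (hLodd : Odd L) [NeZero (L ^ N)]
    (lam : TPt (L ^ N) → ℝ) (j : ℕ) (hj : j < N)
    (hconstj : ∀ y : TPt (L ^ N), coarsePt L N (j + 1) y →
      ∀ x₁ ∈ blockF (L ^ N) (((L : ℤ) ^ (j + 1) - 1) / 2) y,
      ∀ x₂ ∈ blockF (L ^ N) (((L : ℤ) ^ (j + 1) - 1) / 2) y,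
        coarsePt L N j x₁ → coarsePt L N j x₂ →
        Sblk L N lam j x₁ = Sblk L N lam j x₂)
    (IH : ∀ y y', coarsePt L N (j + 1) y → coarsePt L N (j + 1) y' →
      Sblk L N lam (j + 1) y = Sblk L N lam (j + 1) y') :
    ∀ x x', coarsePt L N j x → coarsePt L N j x' →
      Sblk L N lam j x = Sblk L N lam j x' := by
  obtain ⟨k, hk⟩ := hLodd
  have hkz : (L : ℤ) = 2 * (k : ℤ) + 1 := by exact_mod_cast hk
  have hLoddZ : Odd (L:ℤ) := ⟨(k:ℤ), by omega⟩
  have hA : 2 * (((L:ℤ)^j-1)/2) + 1 = (L : ℤ) ^ j := by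
    obtain ⟨a, ha⟩ := Odd.pow (n := j) hLoddZ; omega
  have hB : 2 * (((L:ℤ)^(j+1)-1)/2) + 1 = (L : ℤ) ^ (j+1) := by
    obtain ⟨a, ha⟩ := Odd.pow (n := j+1) hLoddZ; omega
  have hrL : 2 * (((L:ℤ)-1)/2) + 1 = (L : ℤ) := by omega
  have hA1 : (1:ℤ) ≤ (L : ℤ) ^ j := one_le_pow₀ (by omega)
  have hBC : (L : ℤ) ^ (j + 1) ≤ (L : ℤ) ^ N := pow_le_pow_right₀ (by omega) hj
  have hAC : (L : ℤ) ^ j ≤ (L : ℤ) ^ N := pow_le_pow_right₀ (by omega) (by omega)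
  have hn : ((L ^ N : ℕ) : ℤ) = (L : ℤ) ^ N := by push_cast; ring
  have hAn : 2 * (((L:ℤ)^j-1)/2) + 1 ≤ ((L ^ N : ℕ) : ℤ) := by omega
  have hBn : 2 * (((L:ℤ)^(j+1)-1)/2) + 1 ≤ ((L ^ N : ℕ) : ℤ) := by omega
  have hform : ((L:ℤ)^(j+1)-1)/2
      = (2 * (((L:ℤ)^j-1)/2) + 1) * (((L:ℤ)-1)/2) + ((L:ℤ)^j-1)/2 := by
    have hmm : (2 * (((L:ℤ)^j-1)/2) + 1) * (2 * (((L:ℤ)-1)/2) + 1) = (L:ℤ)^(j+1) := by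
      rw [hA, hrL, pow_succ]
    have hmm2 : (2 * (((L:ℤ)^j-1)/2) + 1) * (2 * (((L:ℤ)-1)/2) + 1)
        = 2 * ((2 * (((L:ℤ)^j-1)/2) + 1) * (((L:ℤ)-1)/2)) + 2 * (((L:ℤ)^j-1)/2) + 1 := by
      ring
    omega
  -- the key decomposition
  have key : ∀ x, coarsePt L N j x → ∃ y, coarsePt L N (j + 1) y ∧
      Sblk L N lam (j + 1) y
        = ((Fintype.piFinset (fun _ : Fin 3 =>
            Finset.Icc (-(((L:ℤ)-1)/2)) (((L:ℤ)-1)/2))).card : ℝ) * Sblk L N lam j x := by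
    intro x hx
    obtain ⟨y, q0, hy, hq0, hxeq⟩ := coarse_cover L N hL3 ⟨k, hk⟩ j x hx
    refine ⟨y, hy, ?_⟩
    have hxmem : x ∈ blockF (L ^ N) (((L : ℤ) ^ (j + 1) - 1) / 2) y := by
      rw [hxeq]; exact mem_block_of_coarse L N hL3 ⟨k, hk⟩ j hj y q0 hq0
    calc Sblk L N lam (j + 1) y
        = ∑ t ∈ Fintype.piFinset (fun _ : Fin 3 =>
            Finset.Icc (-(((L:ℤ)^(j+1)-1)/2)) (((L:ℤ)^(j+1)-1)/2)),
            lam (fun i => y i + ((t i : ℤ) : ZMod (L ^ N))) := by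
          simp only [Sblk]; exact blockF_sum hBn y lam
      _ = ∑ q ∈ Fintype.piFinset (fun _ : Fin 3 =>
            Finset.Icc (-(((L:ℤ)-1)/2)) (((L:ℤ)-1)/2)),
            ∑ s ∈ Fintype.piFinset (fun _ : Fin 3 =>
              Finset.Icc (-(((L:ℤ)^j-1)/2)) (((L:ℤ)^j-1)/2)),
            lam (fun i => y i + ((((2 * (((L:ℤ)^j-1)/2) + 1) * q i + s i : ℤ)) : ZMod (L ^ N))) := by
          exact cube_split (((L:ℤ)^j-1)/2) (((L:ℤ)-1)/2) _ (by omega) (by omega) hform _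
      _ = ∑ q ∈ Fintype.piFinset (fun _ : Fin 3 =>
            Finset.Icc (-(((L:ℤ)-1)/2)) (((L:ℤ)-1)/2)),
            Sblk L N lam j (fun i => y i + ((((L : ℤ) ^ j * q i) : ℤ) : ZMod (L ^ N))) := by
          apply Finset.sum_congr rfl
          intro q hq
          rw [show (Sblk L N lam j (fun i => y i + ((((L : ℤ) ^ j * q i) : ℤ) : ZMod (L ^ N))))
            = ∑ s ∈ Fintype.piFinset (fun _ : Fin 3 =>
              Finset.Icc (-(((L:ℤ)^j-1)/2)) (((L:ℤ)^j-1)/2)),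
              lam (fun i => (y i + ((((L : ℤ) ^ j * q i) : ℤ) : ZMod (L ^ N)))
                + ((s i : ℤ) : ZMod (L ^ N))) from by
              simp only [Sblk]; exact blockF_sum hAn _ lam]
          apply Finset.sum_congr rfl
          intro s hs
          congr 1
          funext i
          rw [show (2 * (((L:ℤ)^j-1)/2) + 1) = (L:ℤ)^j from hA]
          push_cast
          ring
      _ = ∑ q ∈ Fintype.piFinset (fun _ : Fin 3 =>
            Finset.Icc (-(((L:ℤ)-1)/2)) (((L:ℤ)-1)/2)), Sblk L N lam j x := by
          apply Finset.sum_congr rfl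
          intro q hq
          simp only [Fintype.mem_piFinset, Finset.mem_Icc] at hq
          have hqabs : ∀ i, |q i| ≤ ((L:ℤ)-1)/2 := by
            intro i; have := hq i; rw [abs_le]; omega
          exact hconstj y hy _
            (mem_block_of_coarse L N hL3 ⟨k, hk⟩ j hj y q hqabs) x hxmem
            (coarse_shift L N j y hy q) hx
      _ = ((Fintype.piFinset (fun _ : Fin 3 =>
            Finset.Icc (-(((L:ℤ)-1)/2)) (((L:ℤ)-1)/2))).card : ℝ) * Sblk L N lam j x := by
          rw [Finset.sum_const, nsmul_eq_mul]
  intro x x' hx hx'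
  obtain ⟨y, hy, hSy⟩ := key x hx
  obtain ⟨y', hy', hSy'⟩ := key x' hx'
  have hcard : (0:ℕ) < (Fintype.piFinset (fun _ : Fin 3 =>
      Finset.Icc (-(((L:ℤ)-1)/2)) (((L:ℤ)-1)/2))).card := by
    rw [Finset.card_pos]
    exact ⟨fun _ => 0, by simp only [Fintype.mem_piFinset, Finset.mem_Icc]; intro i; omega⟩
  have heq := IH y y' hy hy'
  rw [hSy, hSy'] at heq
  exact mul_left_cancel₀ (by exact_mod_cast hcard.ne') heq

lemma blockF_zero_eq {n : ℕ} [NeZero n] (y : TPt n) : blockF n 0 y = {y} := by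
  have hn : 0 < (n:ℤ) := by exact_mod_cast Nat.pos_of_ne_zero (NeZero.ne n)
  ext z
  simp only [blockF, Finset.mem_filter, Finset.mem_univ, true_and, Finset.mem_singleton]
  constructor
  · intro h
    funext i
    have h0 := h i
    have h1 : symRep n (z i - y i) = 0 :=
      abs_eq_zero.mp (le_antisymm h0 (abs_nonneg _))
    have h2 := symRep_cast' n (z i - y i)
    rw [h1] at h2
    simp only [Int.cast_zero] at h2
    exact sub_eq_zero.mp h2.symm
  · rintro rfl i
    rw [sub_self]
    have h0 : symRep n (0 : ZMod n) = 0 := symRep_eq_of n 0 (by simpa using hn) (by simp)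
    rw [h0]
    simp

lemma Sblk_zero (L N : ℕ) [NeZero (L ^ N)] (lam : TPt (L ^ N) → ℝ) (x : TPt (L ^ N)) :
    Sblk L N lam 0 x = lam x := by
  have h0 : (((L:ℤ)^0 - 1)/2) = 0 := by norm_num
  simp only [Sblk, h0, blockF_zero_eq, Finset.sum_singleton]

theorem aux_hierarchical_main (L N : ℕ) (hL3 : 3 ≤ L) (hLodd : Odd L)
    (hN : 1 ≤ N) [NeZero (L ^ N)]
    (lam : TPt (L ^ N) → ℝ)
    (hsum : ∑ x : TPt (L ^ N), lam x = 0)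
    (hconst : ∀ j : ℕ, j < N → ∀ y : TPt (L ^ N),
      (∀ i, ∃ c : ZMod (L ^ N), y i = (L : ZMod (L ^ N)) ^ (j + 1) * c) →
      ∀ x₁ ∈ blockF (L ^ N) (((L : ℤ) ^ (j + 1) - 1) / 2) y,
      ∀ x₂ ∈ blockF (L ^ N) (((L : ℤ) ^ (j + 1) - 1) / 2) y,
        (∀ i, ∃ c : ZMod (L ^ N), x₁ i = (L : ZMod (L ^ N)) ^ j * c) →
        (∀ i, ∃ c : ZMod (L ^ N), x₂ i = (L : ZMod (L ^ N)) ^ j * c) →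
        ((L : ℝ) ^ (3 * j))⁻¹ * ∑ z ∈ blockF (L ^ N) (((L : ℤ) ^ j - 1) / 2) x₁, lam z
          = ((L : ℝ) ^ (3 * j))⁻¹ * ∑ z ∈ blockF (L ^ N) (((L : ℤ) ^ j - 1) / 2) x₂, lam z) :
    lam = 0 := by
  
  have hconst' : ∀ j : ℕ, j < N → ∀ y : TPt (L ^ N), coarsePt L N (j + 1) y →
      ∀ x₁ ∈ blockF (L ^ N) (((L : ℤ) ^ (j + 1) - 1) / 2) y,
      ∀ x₂ ∈ blockF (L ^ N) (((L : ℤ) ^ (j + 1) - 1) / 2) y,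
        coarsePt L N j x₁ → coarsePt L N j x₂ →
        Sblk L N lam j x₁ = Sblk L N lam j x₂ := by
    intro j hj y hy x₁ h₁ x₂ h₂ hc₁ hc₂
    have h := hconst j hj y hy x₁ h₁ x₂ h₂ hc₁ hc₂
    have hne : ((L : ℝ) ^ (3 * j))⁻¹ ≠ 0 := by
      apply inv_ne_zero
      positivity
    exact mul_left_cancel₀ hne h
  have main : ∀ d, d ≤ N → ∀ x x', coarsePt L N (N - d) x → coarsePt L N (N - d) x' →
      Sblk L N lam (N - d) x = Sblk L N lam (N - d) x' := by
    intro d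
    induction d with
    | zero =>
      intro _ x x' hx hx'
      simp only [Nat.sub_zero] at hx hx' ⊢
      have hLN : (L : ZMod (L ^ N)) ^ N = 0 := by
        rw [← Nat.cast_pow, ZMod.natCast_self]
      have hx0 : x = x' := by
        funext i
        obtain ⟨c, hc⟩ := hx i
        obtain ⟨c', hc'⟩ := hx' i
        rw [hc, hc', hLN, zero_mul, zero_mul]
      rw [hx0]
    | succ d ihd =>
      intro hd x x' hx hx'
      have hjlt : N - (d + 1) < N := by omega
      have hjd : N - d = (N - (d + 1)) + 1 := by omega
      apply step_lemma L N hL3 hLodd lam (N - (d + 1)) hjlt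
        (hconst' (N - (d + 1)) hjlt) _ x x' hx hx'
      intro y y' hy hy'
      have := ihd (by omega) y y'
      rw [hjd] at this
      exact this hy hy'
  have hzero : ∀ x x', lam x = lam x' := by
    intro x x'
    have h := main N le_rfl
    simp only [Nat.sub_self] at h
    have hx : coarsePt L N 0 x := fun i => ⟨x i, by rw [pow_zero, one_mul]⟩
    have hx' : coarsePt L N 0 x' := fun i => ⟨x' i, by rw [pow_zero, one_mul]⟩
    have := h x x' hx hx'
    rwa [Sblk_zero, Sblk_zero] at this
  funext x0
  have hs : ∑ x : TPt (L ^ N), lam x = (Fintype.card (TPt (L ^ N)) : ℝ) * lam x0 := by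
    rw [← Finset.card_univ, ← nsmul_eq_mul, ← Finset.sum_const]
    exact Finset.sum_congr rfl (fun x _ => hzero x x0)
  rw [hsum] at hs
  have hcard : 0 < Fintype.card (TPt (L ^ N)) := Fintype.card_pos
  have : lam x0 = 0 := by
    have := hs.symm
    rcases mul_eq_zero.mp this with h | h
    · exact absurd h (by exact_mod_cast hcard.ne')
    · exact h
  simpa using this


/-- Let `λ : T → ℝ` on `T = (ℤ/L^Nℤ)³` satisfy (i) `Σ_x λ(x) = 0`, and
(ii) for every `j < N` and every level-`(j+1)` coarse site `y`, the level-`j` averages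
`Q_jλ` take the same value at all level-`j` coarse sites lying in the block `B^{j+1}(y)`.
Then `λ = 0`. -/
theorem hierarchical_averages_determine (L N : ℕ) (hL3 : 3 ≤ L) (hLodd : Odd L)
    (hN : 1 ≤ N) [NeZero (L ^ N)]
    (lam : TPt (L ^ N) → ℝ)
    (hsum : ∑ x : TPt (L ^ N), lam x = 0)
    (hconst : ∀ j : ℕ, j < N → ∀ y : TPt (L ^ N),
      (∀ i, ∃ c : ZMod (L ^ N), y i = (L : ZMod (L ^ N)) ^ (j + 1) * c) →
      ∀ x₁ ∈ blockF (L ^ N) (((L : ℤ) ^ (j + 1) - 1) / 2) y,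
      ∀ x₂ ∈ blockF (L ^ N) (((L : ℤ) ^ (j + 1) - 1) / 2) y,
        (∀ i, ∃ c : ZMod (L ^ N), x₁ i = (L : ZMod (L ^ N)) ^ j * c) →
        (∀ i, ∃ c : ZMod (L ^ N), x₂ i = (L : ZMod (L ^ N)) ^ j * c) →
        ((L : ℝ) ^ (3 * j))⁻¹ * ∑ z ∈ blockF (L ^ N) (((L : ℤ) ^ j - 1) / 2) x₁, lam z
          = ((L : ℝ) ^ (3 * j))⁻¹ * ∑ z ∈ blockF (L ^ N) (((L : ℤ) ^ j - 1) / 2) x₂, lam z) :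
    lam = 0 := by
  exact aux_hierarchical_main L N hL3 hLodd hN lam hsum hconst
end
end

section
/- Let Z be a gauge field on T and define μ : T → ℝ by μ(x) := −(τZ)(y,x) + L^{-3} Σ_{x'∈B(y)} (τZ)(y,x') for x ∈ B(y), y ∈ T'. Then for every y ∈ T': (τZ)(y,x) + μ(x) − μ(y) = 0 for all x ∈ B(y), and Σ_{x∈B(y)} μ(x) = 0. Moreover μ is the unique function T → ℝ with these two properties; equivalently, τ(Z + ∂μ)(y,x) = 0 for all x ∈ B(y) and all y ∈ T'. -/
open Finset

noncomputable section

/-- The representative in `{-(L-1)/2, …, (L-1)/2}` of `a` modulo `L` (for odd `L`):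
the offset of `a` from the nearest point of the coarse lattice `Lℤ/Nℤ`. -/
def nearRes (L : ℕ) {N : ℕ} (a : ZMod N) : ℤ :=
  if 2 * ((a.val % L : ℕ) : ℤ) + 1 ≤ (L : ℤ) then ((a.val % L : ℕ) : ℤ)
  else ((a.val % L : ℕ) : ℤ) - (L : ℤ)

/-- The coarse site `y ∈ T'` whose block `B(y)` contains `x`. -/
def coarsePart (L : ℕ) {N : ℕ} (x : TPt N) : TPt N :=
  fun i => x i - ((nearRes L (x i) : ℤ) : ZMod N)

/-- The map `ℳ`: for `x ∈ B(y)`,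
`(ℳZ)(x) = −(τZ)(y,x) + L⁻³ Σ_{x' ∈ B(y)} (τZ)(y,x')`. -/
def Mmap (L : ℕ) {N : ℕ} [NeZero N] (Z : TPt N → TPt N → ℝ) (x : TPt N) : ℝ :=
  - tauBlk Z (coarsePart L x) x
    + ((L : ℝ) ^ 3)⁻¹ *
        ∑ x' ∈ blockF N (((L : ℤ) - 1) / 2) (coarsePart L x), tauBlk Z (coarsePart L x) x'


/-!
`τ` is linear in the gauge field, and on a gradient every path sum telescopes, so
`τ(∂f)(y,x) = f x - f y`. Hence `τ(Z + ∂μ) = 0` on `B(y)` says exactly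
`μ x = μ y - (τZ)(y,x)` there. Summing over the `L³` points of `B(y)` and using `Σ μ = 0`
forces `μ y = L⁻³ Σ_{x'} (τZ)(y,x')`, which is `ℳZ` at `y` because `(τZ)(y,y) = 0`; conversely
this `μ` works. Since `L ∣ L^M`, every `x` lies in the block of exactly one coarse site, namely
`coarsePart L x`, so these block-wise statements determine `μ` on the whole torus.
-/

section SymRep

variable {N : ℕ} [NeZero N]

lemma intCast_symRep (a : ZMod N) : ((symRep N a : ℤ) : ZMod N) = a := by
  unfold symRep
  split <;> simp

lemma symRep_intCast {t : ℤ} (ht : 2 * |t| < N) : symRep N (t : ZMod N) = t := by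
  have hN : 0 < (N : ℤ) := by exact_mod_cast NeZero.pos N
  unfold symRep
  rw [ZMod.val_intCast]
  rcases abs_cases t with ⟨h, _⟩ | ⟨h, _⟩
  · rw [Int.emod_eq_of_lt (by omega) (by omega)]
    split <;> omega
  · rw [← Int.add_emod_right, Int.emod_eq_of_lt (by omega) (by omega)]
    split <;> omega

lemma symRep_zero : symRep N 0 = 0 := by
  simpa using symRep_intCast (N := N) (t := 0) (by simpa using NeZero.pos N)

lemma abs_symRep_le (hN : Odd N) (a : ZMod N) : |symRep N a| ≤ ((N : ℤ) - 1) / 2 := by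
  obtain ⟨k, rfl⟩ := hN
  have := a.val_lt
  unfold symRep
  split <;> rw [abs_le] <;> constructor <;> push_cast at * <;> omega

end SymRep

section PathSums

variable {N : ℕ}

lemma shiftT_zero (z : TPt N) (μ : Fin 3) : shiftT z μ 0 = z := by
  funext i; simp [shiftT]

lemma segT_zero (A : TPt N → TPt N → ℝ) (z : TPt N) (μ : Fin 3) : segT A z μ 0 = 0 := by
  simp [segT]

lemma segT_add (A B : TPt N → TPt N → ℝ) (z : TPt N) (μ : Fin 3) (t : ℤ) :
    segT (A + B) z μ t = segT A z μ t + segT B z μ t := by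
  unfold segT
  split_ifs <;> exact Finset.sum_add_distrib

lemma segT_grad (f : TPt N → ℝ) (z : TPt N) (μ : Fin 3) (t : ℤ) :
    segT (fun a b => f b - f a) z μ t = f (shiftT z μ t) - f z := by
  unfold segT
  split_ifs with ht
  · have := Finset.sum_range_sub (fun j : ℕ => f (shiftT z μ j)) t.toNat
    simpa [Int.toNat_of_nonneg ht, shiftT_zero] using this
  · have := Finset.sum_range_sub (fun j : ℕ => f (shiftT z μ (-j))) (-t).toNat
    simpa [Int.toNat_of_nonneg (by omega : 0 ≤ -t), shiftT_zero, sub_eq_add_neg, add_comm]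
      using this

lemma interPtT_zero (y x : TPt N) (π : Equiv.Perm (Fin 3)) : interPtT y x π 0 = y := by
  funext i; simp [interPtT]

lemma interPtT_three (y x : TPt N) (π : Equiv.Perm (Fin 3)) : interPtT y x π 3 = x := by
  funext i; simp [interPtT, (π.symm i).isLt]

lemma shiftT_interPtT [NeZero N] (y x : TPt N) (π : Equiv.Perm (Fin 3)) (m : Fin 3) :
    shiftT (interPtT y x π m) (π m) (symRep N (x (π m) - y (π m))) =
      interPtT y x π (m + 1) := by
  funext i
  rw [shiftT, interPtT, interPtT]
  rcases eq_or_ne i (π m) with rfl | hi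
  · simp [intCast_symRep]
  · have : (π.symm i : ℕ) ≠ m := fun h => hi (by rw [← Fin.ext h, Equiv.apply_symm_apply])
    simp only [hi, if_false]
    congr 1
    simp only [eq_iff_iff]
    omega

lemma gammaSumT_add (A B : TPt N → TPt N → ℝ) (π : Equiv.Perm (Fin 3)) (y x : TPt N) :
    gammaSumT (A + B) π y x = gammaSumT A π y x + gammaSumT B π y x := by
  simp only [gammaSumT, segT_add, Finset.sum_add_distrib]

lemma gammaSumT_grad [NeZero N] (f : TPt N → ℝ) (π : Equiv.Perm (Fin 3)) (y x : TPt N) :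
    gammaSumT (fun a b => f b - f a) π y x = f x - f y := by
  simp only [gammaSumT, segT_grad, shiftT_interPtT, Fin.sum_univ_three]
  simp [interPtT_zero, interPtT_three]

lemma tauBlk_add (A B : TPt N → TPt N → ℝ) (y x : TPt N) :
    tauBlk (A + B) y x = tauBlk A y x + tauBlk B y x := by
  simp only [tauBlk, gammaSumT_add, Finset.sum_add_distrib, mul_add]

lemma tauBlk_grad [NeZero N] (f : TPt N → ℝ) (y x : TPt N) :
    tauBlk (fun a b => f b - f a) y x = f x - f y := by
  simp [tauBlk, gammaSumT_grad, Fintype.card_perm, Nat.factorial]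
  ring

lemma tauBlk_self [NeZero N] (A : TPt N → TPt N → ℝ) (y : TPt N) : tauBlk A y y = 0 := by
  simp [tauBlk, gammaSumT, symRep_zero, segT_zero]

end PathSums

lemma nearRes_eq_symRep {L N : ℕ} [NeZero L] (a : ZMod N) :
    nearRes L a = symRep L (a.val : ZMod L) := by
  rw [nearRes, symRep, ZMod.val_natCast]

lemma castHom_eq_zero_of_isCoarse {L N : ℕ} (hLN : L ∣ N) {y : TPt N} (hy : isCoarse L N y)
    (i : Fin 3) :
    ZMod.castHom hLN (ZMod L) (y i) = 0 := by
  obtain ⟨c, hc⟩ := hy i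
  rw [hc, map_mul, map_natCast, ZMod.natCast_self, zero_mul]

section Blocks

variable {L N : ℕ} [NeZero N]

lemma mem_blockF {R : ℤ} {y x : TPt N} :
    x ∈ blockF N R y ↔ ∀ i, |symRep N (x i - y i)| ≤ R := by
  simp [blockF]

lemma self_mem_blockF {R : ℤ} (hR : 0 ≤ R) (y : TPt N) : y ∈ blockF N R y := by
  simpa [mem_blockF, symRep_zero] using hR

lemma card_blockF {R : ℤ} (hRN : 2 * R < N) (y : TPt N) :
    #(blockF N R y) = (2 * R + 1).toNat ^ 3 := by
  have hbox : #(Fintype.piFinset fun _ : Fin 3 => Icc (-R) R) = (2 * R + 1).toNat ^ 3 := by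
    simp [Int.card_Icc, show R + 1 + R = 2 * R + 1 by ring]
  rw [← hbox]
  refine card_bij' (fun x _ i => symRep N (x i - y i)) (fun t _ i => y i + t i) ?_ ?_ ?_ ?_
  · intro x hx
    simpa [Fintype.mem_piFinset, abs_le] using mem_blockF.mp hx
  · intro t ht
    rw [mem_blockF]
    intro i
    have hti : |t i| ≤ R := abs_le.mpr (mem_Icc.mp (Fintype.mem_piFinset.mp ht i))
    rwa [add_sub_cancel_left, symRep_intCast (by omega)]
  · intro x _
    funext i
    simp [intCast_symRep]
  · intro t ht
    funext i
    have hti : |t i| ≤ R := abs_le.mpr (mem_Icc.mp (Fintype.mem_piFinset.mp ht i))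
    rw [add_sub_cancel_left, symRep_intCast (by omega)]

lemma card_blockF_half (hL : Odd L) (hLN : L ≤ N) (y : TPt N) :
    #(blockF N (((L : ℤ) - 1) / 2) y) = L ^ 3 := by
  obtain ⟨k, rfl⟩ := hL
  rw [card_blockF (by omega)]
  congr
  omega

lemma coarsePart_isCoarse [NeZero L] (x : TPt N) : isCoarse L N (coarsePart L x) := by
  intro i
  have hdvd : (L : ℤ) ∣ (x i).val - nearRes L (x i) := by
    rw [← ZMod.intCast_zmod_eq_zero_iff_dvd, Int.cast_sub, nearRes_eq_symRep, intCast_symRep]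
    simp
  obtain ⟨k, hk⟩ := hdvd
  refine ⟨k, ?_⟩
  have := congrArg (fun z : ℤ => (z : ZMod N)) hk
  simpa [coarsePart] using this

lemma mem_blockF_coarsePart (hL : Odd L) (hLN : L ≤ N) (x : TPt N) :
    x ∈ blockF N (((L : ℤ) - 1) / 2) (coarsePart L x) := by
  have : NeZero L := ⟨hL.pos.ne'⟩
  rw [mem_blockF]
  intro i
  have hr := abs_symRep_le hL ((x i).val : ZMod L)
  rw [← nearRes_eq_symRep] at hr
  have hdiff : x i - coarsePart L x i = (nearRes L (x i) : ZMod N) := by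
    simp [coarsePart]
  rw [hdiff, symRep_intCast (by omega)]
  exact hr

lemma coarsePart_eq_of_mem (hL : Odd L) (hLN : L ∣ N) {y x : TPt N} (hy : isCoarse L N y)
    (hx : x ∈ blockF N (((L : ℤ) - 1) / 2) y) : coarsePart L x = y := by
  have : NeZero L := ⟨hL.pos.ne'⟩
  funext i
  set d := symRep N (x i - y i)
  have hd : |d| ≤ ((L : ℤ) - 1) / 2 := mem_blockF.mp hx i
  have hxd : x i = y i + d := by rw [intCast_symRep]; ring
  have hnear : nearRes L (x i) = d := by
    rw [nearRes_eq_symRep, ZMod.natCast_val, ← ZMod.castHom_apply (h := hLN), hxd, map_add,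
      map_intCast, castHom_eq_zero_of_isCoarse hLN hy, zero_add, symRep_intCast]
    obtain ⟨k, rfl⟩ := hL
    push_cast
    omega
  rw [coarsePart, hnear, hxd]
  ring

end Blocks

lemma add_sub_eq_zero_and_sum_eq_zero_iff {α : Type*} {B : Finset α} {y : α} (hy : y ∈ B)
    {t : α → ℝ} (ht : t y = 0) (μ : α → ℝ) :
    ((∀ x ∈ B, t x + μ x - μ y = 0) ∧ ∑ x ∈ B, μ x = 0) ↔
      ∀ x ∈ B, μ x = -t x + (#B : ℝ)⁻¹ * ∑ x' ∈ B, t x' := by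
  have hB : (#B : ℝ) ≠ 0 := by exact_mod_cast (card_pos.mpr ⟨y, hy⟩).ne'
  constructor
  · rintro ⟨hdiff, hsum⟩ x hx
    have hμ : ∀ x ∈ B, μ x = μ y - t x := fun x hx => by linarith [hdiff x hx]
    have hμy : (#B : ℝ) * μ y = ∑ x' ∈ B, t x' := by
      rw [sum_congr rfl hμ, sum_sub_distrib, sum_const, nsmul_eq_mul] at hsum
      linarith
    rw [hμ x hx, ← hμy, inv_mul_cancel_left₀ hB]
    ring
  · intro hμ
    refine ⟨fun x hx => by rw [hμ x hx, hμ y hy, ht]; ring, ?_⟩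
    rw [sum_congr rfl hμ, sum_add_distrib, sum_const, nsmul_eq_mul, mul_inv_cancel_left₀ hB,
      sum_neg_distrib, neg_add_cancel]

lemma Mmap_eq_of_mem {L N : ℕ} [NeZero N] (hL : Odd L) (hLN : L ∣ N) (Z : TPt N → TPt N → ℝ)
    {y x : TPt N} (hy : isCoarse L N y) (hx : x ∈ blockF N (((L : ℤ) - 1) / 2) y) :
    Mmap L Z x = -tauBlk Z y x + (#(blockF N (((L : ℤ) - 1) / 2) y) : ℝ)⁻¹ *
      ∑ x' ∈ blockF N (((L : ℤ) - 1) / 2) y, tauBlk Z y x' := by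
  rw [Mmap, coarsePart_eq_of_mem hL hLN hy hx,
    card_blockF_half hL (Nat.le_of_dvd (NeZero.pos N) hLN)]
  push_cast
  rfl

lemma tauBlk_add_sub_eq_zero_and_sum_eq_zero_iff {L N : ℕ} [NeZero N] (hL : Odd L)
    (hLN : L ∣ N) (Z : TPt N → TPt N → ℝ) {y : TPt N} (hy : isCoarse L N y) (μ : TPt N → ℝ) :
    ((∀ x ∈ blockF N (((L : ℤ) - 1) / 2) y, tauBlk Z y x + μ x - μ y = 0) ∧
        ∑ x ∈ blockF N (((L : ℤ) - 1) / 2) y, μ x = 0) ↔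
      ∀ x ∈ blockF N (((L : ℤ) - 1) / 2) y, μ x = Mmap L Z x := by
  have hR : 0 ≤ ((L : ℤ) - 1) / 2 := by obtain ⟨k, rfl⟩ := hL; omega
  rw [add_sub_eq_zero_and_sum_eq_zero_iff (self_mem_blockF hR y) (tauBlk_self Z y)]
  exact forall₂_congr fun x hx => by rw [Mmap_eq_of_mem hL hLN Z hy hx]

theorem axial_gauge_projection_general (L M : ℕ) (hLodd : Odd L) (hM : 2 ≤ M)
    [NeZero (L ^ M)]
    (Z : TPt (L ^ M) → TPt (L ^ M) → ℝ) :
    (∀ y : TPt (L ^ M), isCoarse L (L ^ M) y →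
        (∀ x ∈ blockF (L ^ M) (((L : ℤ) - 1) / 2) y,
          tauBlk Z y x + Mmap L Z x - Mmap L Z y = 0) ∧
        ∑ x ∈ blockF (L ^ M) (((L : ℤ) - 1) / 2) y, Mmap L Z x = 0) ∧
    (∀ μ' : TPt (L ^ M) → ℝ,
        (∀ y : TPt (L ^ M), isCoarse L (L ^ M) y →
          (∀ x ∈ blockF (L ^ M) (((L : ℤ) - 1) / 2) y,
            tauBlk Z y x + μ' x - μ' y = 0) ∧
          ∑ x ∈ blockF (L ^ M) (((L : ℤ) - 1) / 2) y, μ' x = 0) →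
        μ' = Mmap L Z) ∧
    (∀ y : TPt (L ^ M), isCoarse L (L ^ M) y →
        ∀ x ∈ blockF (L ^ M) (((L : ℤ) - 1) / 2) y,
          tauBlk (fun a b => Z a b + (Mmap L Z b - Mmap L Z a)) y x = 0) := by
  have : NeZero L := ⟨hLodd.pos.ne'⟩
  have hLN : L ∣ L ^ M := dvd_pow_self L (by omega)
  have hchar := fun y (hy : isCoarse L (L ^ M) y) =>
    tauBlk_add_sub_eq_zero_and_sum_eq_zero_iff hLodd hLN Z hy
  have hMmap := fun y hy => (hchar y hy (Mmap L Z)).mpr fun _ _ => rfl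
  refine ⟨hMmap, fun μ' hμ' => funext fun x => ?_, fun y hy x hx => ?_⟩
  · have hcoarse := coarsePart_isCoarse (L := L) x
    exact (hchar _ hcoarse μ' |>.mp (hμ' _ hcoarse)) x
      (mem_blockF_coarsePart hLodd (Nat.le_of_dvd (NeZero.pos _) hLN) x)
  · change tauBlk (Z + fun a b => Mmap L Z b - Mmap L Z a) y x = 0
    rw [tauBlk_add, tauBlk_grad]
    linarith [(hMmap y hy).1 x hx]

/-- For a gauge field `Z` on `T`, the function `μ = ℳZ` satisfies, for
every coarse site `y`: `(τZ)(y,x) + μ(x) − μ(y) = 0` for all `x ∈ B(y)`, and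
`Σ_{x ∈ B(y)} μ(x) = 0`; moreover `μ` is the unique function with these two properties;
equivalently `τ(Z + ∂μ)(y,x) = 0` for all `x ∈ B(y)` and all coarse `y`. -/
theorem axial_gauge_projection (L M : ℕ) (hL3 : 3 ≤ L) (hLodd : Odd L) (hM : 2 ≤ M)
    [NeZero (L ^ M)]
    (Z : TPt (L ^ M) → TPt (L ^ M) → ℝ) (hZ : ∀ x x', Z x x' = - Z x' x) :
    (∀ y : TPt (L ^ M), isCoarse L (L ^ M) y →
        (∀ x ∈ blockF (L ^ M) (((L : ℤ) - 1) / 2) y,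
          tauBlk Z y x + Mmap L Z x - Mmap L Z y = 0) ∧
        ∑ x ∈ blockF (L ^ M) (((L : ℤ) - 1) / 2) y, Mmap L Z x = 0) ∧
    (∀ μ' : TPt (L ^ M) → ℝ,
        (∀ y : TPt (L ^ M), isCoarse L (L ^ M) y →
          (∀ x ∈ blockF (L ^ M) (((L : ℤ) - 1) / 2) y,
            tauBlk Z y x + μ' x - μ' y = 0) ∧
          ∑ x ∈ blockF (L ^ M) (((L : ℤ) - 1) / 2) y, μ' x = 0) →
        μ' = Mmap L Z) ∧
    (∀ y : TPt (L ^ M), isCoarse L (L ^ M) y →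
        ∀ x ∈ blockF (L ^ M) (((L : ℤ) - 1) / 2) y,
          tauBlk (fun a b => Z a b + (Mmap L Z b - Mmap L Z a)) y x = 0) :=
  axial_gauge_projection_general L M hLodd hM Z
end
end
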